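/- Let n ≥ 2, s ∈ (0,1), and μ be real with n/2 < μ ≤ n+2s. Let K : ℝⁿ → [0,∞) be measurable with K ∈ L¹(ℝⁿ) and satisfying K(x) ≤ C₁ |x|^{-(n+2s)} for all |x| > 1/2, for some C₁ > 0. Define φ(x) := ∫_{ℝⁿ} K(y) (1+|x-y|)^{-μ} dy. Then there exists a constant C₀ > 0 (depending on n, s, μ, C₁, ‖K‖_{L¹}) such that φ(x) ≤ C₀ (1+|x|)^{-μ} for all x ∈ ℝⁿ. -/
import Mathlib
set_option maxHeartbeats 1000000

open MeasureTheory

theorem convolution_preserves_polynomial_decay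
    (n : ℕ) (hn : 2 ≤ n) (s μ C₁ : ℝ) (hs0 : 0 < s) (hs1 : s < 1)
    (hμ1 : (n : ℝ) / 2 < μ) (hμ2 : μ ≤ (n : ℝ) + 2 * s) (hC₁ : 0 < C₁)
    (K : EuclideanSpace ℝ (Fin n) → ℝ)
    (hK0 : ∀ x, 0 ≤ K x) (hKm : Measurable K) (hKint : Integrable K volume)
    (hKdec : ∀ x : EuclideanSpace ℝ (Fin n), 1 / 2 < ‖x‖ →
      K x ≤ C₁ * ‖x‖ ^ (-((n : ℝ) + 2 * s))) :
    ∃ C₀ > 0, ∀ x : EuclideanSpace ℝ (Fin n),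
      (∫ y, K y * (1 + ‖x - y‖) ^ (-μ)) ≤ C₀ * (1 + ‖x‖) ^ (-μ) := by
  let E := EuclideanSpace ℝ (Fin n)
  have hn2 : (2:ℝ) ≤ (n:ℝ) := by exact_mod_cast hn
  have hμ0 : 0 < μ := by linarith
  -- the auxiliary exponent
  set t : ℝ := max 0 ((n:ℝ) - μ + s) with ht_def
  have ht0 : 0 ≤ t := le_max_left _ _
  have htn : (n:ℝ) < μ + t := by
    rcases le_or_gt ((n:ℝ) - μ + s) 0 with h | h
    · have : t = 0 := max_eq_left h
      rw [this]; linarith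
    · have : t = (n:ℝ) - μ + s := max_eq_right h.le
      rw [this]; linarith
  have hts : t ≤ (n:ℝ) + 2*s - μ := by
    rcases le_or_gt ((n:ℝ) - μ + s) 0 with h | h
    · have : t = 0 := max_eq_left h
      rw [this]; linarith
    · have : t = (n:ℝ) - μ + s := max_eq_right h.le
      rw [this]; linarith
  -- integrability of the majorant
  have hcint : Integrable (fun z : E => (1 + ‖z‖) ^ (-(μ + t))) volume := by
    apply integrable_one_add_norm
    rw [finrank_euclideanSpace_fin]; exact htn
  set c : ℝ := ∫ z : E, (1 + ‖z‖) ^ (-(μ + t)) with hc_def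
  have hc0 : 0 ≤ c := integral_nonneg fun z => Real.rpow_nonneg (by positivity) _
  set M : ℝ := ∫ y : E, K y with hM_def
  have hM0 : 0 ≤ M := integral_nonneg hK0
  -- measurability/integrability of the integrand
  have hcont : ∀ x : E, Continuous fun y : E => (1 + ‖x - y‖) ^ (-μ) := by
    intro x
    refine Continuous.rpow_const (by continuity) fun y => Or.inl ?_
    positivity
  have hmeas : ∀ x : E, Measurable fun y : E => (1 + ‖x - y‖) ^ (-μ) :=
    fun x => (hcont x).measurable
  have hrle1 : ∀ (a : ℝ), 0 ≤ a → (1 + a) ^ (-μ) ≤ 1 := fun a ha =>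
    Real.rpow_le_one_of_one_le_of_nonpos (by linarith) (by linarith)
  have hgint : ∀ x : E, Integrable (fun y : E => K y * (1 + ‖x - y‖) ^ (-μ)) volume := by
    intro x
    refine hKint.mono' ((hKm.mul (hmeas x)).aestronglyMeasurable) (ae_of_all _ fun y => ?_)
    rw [Real.norm_eq_abs, abs_of_nonneg (mul_nonneg (hK0 y) (Real.rpow_nonneg (by positivity) _))]
    calc K y * (1 + ‖x - y‖) ^ (-μ) ≤ K y * 1 :=
          mul_le_mul_of_nonneg_left (hrle1 _ (norm_nonneg _)) (hK0 y)
      _ = K y := mul_one _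
  -- Key ball estimate
  have hI : ∀ R : ℝ, 1/2 ≤ R →
      (∫ z : E in Metric.ball 0 R, (1 + ‖z‖) ^ (-μ)) ≤ c * 3 ^ t * R ^ t := by
    intro R hR
    have hR0 : (0:ℝ) < R := by linarith
    have hcont0 : Continuous fun z : E => (1 + ‖z‖) ^ (-μ) := by
      refine Continuous.rpow_const (by continuity) fun z => Or.inl ?_
      positivity
    have hint1 : IntegrableOn (fun z : E => (1 + ‖z‖) ^ (-μ)) (Metric.ball 0 R) volume :=
      (hcont0.locallyIntegrable.integrableOn_isCompact (isCompact_closedBall 0 R)).mono_set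
        Metric.ball_subset_closedBall
    have hint2 : IntegrableOn (fun z : E => (1 + R) ^ t * (1 + ‖z‖) ^ (-(μ + t)))
        (Metric.ball 0 R) volume := (hcint.const_mul _).integrableOn
    have step1 : (∫ z : E in Metric.ball 0 R, (1 + ‖z‖) ^ (-μ)) ≤
        ∫ z : E in Metric.ball 0 R, (1 + R) ^ t * (1 + ‖z‖) ^ (-(μ + t)) := by
      refine setIntegral_mono_on hint1 hint2 measurableSet_ball fun z hz => ?_
      have hz' : ‖z‖ < R := by simpa [Metric.mem_ball, dist_eq_norm] using hz
      have hbase : (0:ℝ) < 1 + ‖z‖ := by positivity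
      have hsplit : (1 + ‖z‖) ^ (-μ) = (1 + ‖z‖) ^ t * (1 + ‖z‖) ^ (-(μ + t)) := by
        rw [← Real.rpow_add hbase]; ring_nf
      rw [hsplit]
      exact mul_le_mul_of_nonneg_right
        (Real.rpow_le_rpow hbase.le (by linarith) ht0)
        (Real.rpow_nonneg hbase.le _)
    have step2 : (∫ z : E in Metric.ball 0 R, (1 + R) ^ t * (1 + ‖z‖) ^ (-(μ + t))) =
        (1 + R) ^ t * ∫ z : E in Metric.ball 0 R, (1 + ‖z‖) ^ (-(μ + t)) :=
      integral_const_mul _ _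
    have step3 : (∫ z : E in Metric.ball 0 R, (1 + ‖z‖) ^ (-(μ + t))) ≤ c :=
      setIntegral_le_integral hcint (ae_of_all _ fun z => Real.rpow_nonneg (by positivity) _)
    have step4 : (1 + R) ^ t ≤ 3 ^ t * R ^ t := by
      calc (1 + R) ^ t ≤ (3 * R) ^ t :=
            Real.rpow_le_rpow (by positivity) (by linarith) ht0
        _ = 3 ^ t * R ^ t := Real.mul_rpow (by norm_num) hR0.le
    calc (∫ z : E in Metric.ball 0 R, (1 + ‖z‖) ^ (-μ))
        ≤ (1 + R) ^ t * ∫ z : E in Metric.ball 0 R, (1 + ‖z‖) ^ (-(μ + t)) := by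
          rw [← step2]; exact step1
      _ ≤ (1 + R) ^ t * c := mul_le_mul_of_nonneg_left step3 (by positivity)
      _ ≤ 3 ^ t * R ^ t * c := mul_le_mul_of_nonneg_right step4 hc0
      _ = c * 3 ^ t * R ^ t := by ring
  -- constant
  refine ⟨M * 2 ^ μ + C₁ * c * 3 ^ t * 2 ^ ((n:ℝ) + 2*s) * 4 ^ μ + 1, by positivity, ?_⟩
  intro x
  have hD0 : (0:ℝ) < (1 + ‖x‖) ^ (-μ) := Real.rpow_pos_of_pos (by positivity) _
  rcases lt_or_ge ‖x‖ 1 with hx1 | hx1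
  · -- small x
    have h1 : (∫ y, K y * (1 + ‖x - y‖) ^ (-μ)) ≤ M := by
      refine integral_mono_of_nonneg (ae_of_all _ fun y => mul_nonneg (hK0 y) (Real.rpow_nonneg (by positivity) _)) hKint
        (ae_of_all _ fun y => ?_)
      calc K y * (1 + ‖x - y‖) ^ (-μ) ≤ K y * 1 :=
            mul_le_mul_of_nonneg_left (hrle1 _ (norm_nonneg _)) (hK0 y)
        _ = K y := mul_one _
    have h2 : (1:ℝ) ≤ 2 ^ μ * (1 + ‖x‖) ^ (-μ) := by
      have hup : (1 + ‖x‖) ≤ 2 := by linarith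
      have : (2:ℝ) ^ (-μ) ≤ (1 + ‖x‖) ^ (-μ) :=
        Real.rpow_le_rpow_of_nonpos (by positivity) hup (by linarith)
      calc (1:ℝ) = 2 ^ μ * 2 ^ (-μ) := by
            rw [← Real.rpow_add (by norm_num)]; simp
        _ ≤ 2 ^ μ * (1 + ‖x‖) ^ (-μ) :=
            mul_le_mul_of_nonneg_left this (by positivity)
    calc (∫ y, K y * (1 + ‖x - y‖) ^ (-μ)) ≤ M := h1
      _ = M * 1 := (mul_one _).symm
      _ ≤ M * (2 ^ μ * (1 + ‖x‖) ^ (-μ)) := mul_le_mul_of_nonneg_left h2 hM0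
      _ ≤ (M * 2 ^ μ + C₁ * c * 3 ^ t * 2 ^ ((n:ℝ) + 2*s) * 4 ^ μ + 1) * (1 + ‖x‖) ^ (-μ) := by
          rw [← mul_assoc]
          nlinarith [hD0.le, mul_nonneg (mul_nonneg (mul_nonneg (mul_nonneg hC₁.le hc0)
            (Real.rpow_nonneg (by norm_num : (0:ℝ) ≤ 3) t))
            (Real.rpow_nonneg (by norm_num : (0:ℝ) ≤ 2) ((n:ℝ)+2*s)))
            (Real.rpow_nonneg (by norm_num : (0:ℝ) ≤ 4) μ)]
  · -- large x
    set R : ℝ := ‖x‖ / 2 with hR_def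
    have hR : (1:ℝ)/2 ≤ R := by
      simp only [hR_def]; linarith
    have hR0 : (0:ℝ) < R := by linarith
    have hxR : ‖x‖ = 2 * R := by simp only [hR_def]; ring
    have hsplit : (∫ y, K y * (1 + ‖x - y‖) ^ (-μ)) =
        (∫ y in Metric.ball x R, K y * (1 + ‖x - y‖) ^ (-μ)) +
        ∫ y in (Metric.ball x R)ᶜ, K y * (1 + ‖x - y‖) ^ (-μ) :=
      (integral_add_compl measurableSet_ball (hgint x)).symm
    -- complement estimate
    have hb : (1 + R) ^ (-μ) ≤ 2 ^ μ * (1 + ‖x‖) ^ (-μ) := by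
      have h1 : (1 + ‖x‖) / 2 ≤ 1 + R := by rw [hxR]; linarith
      have h2 : (1 + R) ^ (-μ) ≤ ((1 + ‖x‖) / 2) ^ (-μ) :=
        Real.rpow_le_rpow_of_nonpos (by positivity) h1 (by linarith)
      have h3 : ((1 + ‖x‖) / 2) ^ (-μ) = 2 ^ μ * (1 + ‖x‖) ^ (-μ) := by
        rw [Real.div_rpow (by positivity) (by norm_num : (0:ℝ) ≤ 2),
          Real.rpow_neg (by norm_num : (0:ℝ) ≤ 2), div_eq_mul_inv, inv_inv, mul_comm]
      linarith
    have hA : (∫ y in (Metric.ball x R)ᶜ, K y * (1 + ‖x - y‖) ^ (-μ)) ≤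
        M * (2 ^ μ * (1 + ‖x‖) ^ (-μ)) := by
      have hmono : ∀ y ∈ (Metric.ball x R)ᶜ,
          K y * (1 + ‖x - y‖) ^ (-μ) ≤ K y * (1 + R) ^ (-μ) := by
        intro y hy
        have hdist : R ≤ ‖x - y‖ := by
          have := Metric.mem_ball.not.mp hy
          rw [dist_eq_norm, norm_sub_rev] at this
          linarith [not_lt.mp this]
        exact mul_le_mul_of_nonneg_left
          (Real.rpow_le_rpow_of_nonpos (by positivity) (by linarith) (by linarith)) (hK0 y)
      calc (∫ y in (Metric.ball x R)ᶜ, K y * (1 + ‖x - y‖) ^ (-μ))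
          ≤ ∫ y in (Metric.ball x R)ᶜ, K y * (1 + R) ^ (-μ) :=
            setIntegral_mono_on ((hgint x).integrableOn)
              ((hKint.mul_const _).integrableOn) measurableSet_ball.compl hmono
        _ = (∫ y in (Metric.ball x R)ᶜ, K y) * (1 + R) ^ (-μ) := integral_mul_const _ _
        _ ≤ M * (1 + R) ^ (-μ) := mul_le_mul_of_nonneg_right
            (setIntegral_le_integral hKint (ae_of_all _ hK0)) (Real.rpow_nonneg (by positivity) _)
        _ ≤ M * (2 ^ μ * (1 + ‖x‖) ^ (-μ)) := mul_le_mul_of_nonneg_left hb hM0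
    -- ball estimate
    have hKbd : ∀ y ∈ Metric.ball x R, K y ≤ C₁ * R ^ (-((n:ℝ) + 2 * s)) := by
      intro y hy
      have hyx : ‖x - y‖ < R := by
        have := Metric.mem_ball.mp hy
        rwa [dist_eq_norm, ← norm_sub_rev] at this
      have hylb : R < ‖y‖ := by
        have h := norm_sub_norm_le x y
        rw [hxR] at h
        linarith [h]
      have h12 : 1/2 < ‖y‖ := lt_of_le_of_lt hR hylb
      calc K y ≤ C₁ * ‖y‖ ^ (-((n:ℝ) + 2 * s)) := hKdec y h12
        _ ≤ C₁ * R ^ (-((n:ℝ) + 2 * s)) := mul_le_mul_of_nonneg_left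
            (Real.rpow_le_rpow_of_nonpos hR0 hylb.le (by linarith)) hC₁.le
    have htrans : (∫ y in Metric.ball x R, (1 + ‖x - y‖) ^ (-μ)) =
        ∫ z : E in Metric.ball 0 R, (1 + ‖z‖) ^ (-μ) := by
      rw [← integral_indicator measurableSet_ball,
        ← integral_indicator measurableSet_ball,
        ← integral_sub_left_eq_self
          (fun z : E => Set.indicator (Metric.ball (0:E) R) (fun z => (1 + ‖z‖) ^ (-μ)) z)
          volume x]
      congr 1 with y
      have hmem : y ∈ Metric.ball x R ↔ x - y ∈ Metric.ball (0:E) R := by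
        simp [Metric.mem_ball, dist_eq_norm, norm_sub_rev x y]
      by_cases h : y ∈ Metric.ball x R
      · rw [Set.indicator_of_mem h, Set.indicator_of_mem (hmem.mp h)]
      · rw [Set.indicator_of_notMem h, Set.indicator_of_notMem (fun hc => h (hmem.mpr hc))]
    have hballint : IntegrableOn (fun y : E => (1 + ‖x - y‖) ^ (-μ)) (Metric.ball x R) volume :=
      ((hcont x).locallyIntegrable.integrableOn_isCompact (isCompact_closedBall x R)).mono_set
        Metric.ball_subset_closedBall
    have hB1 : (∫ y in Metric.ball x R, K y * (1 + ‖x - y‖) ^ (-μ)) ≤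
        C₁ * R ^ (-((n:ℝ) + 2 * s)) * (c * 3 ^ t * R ^ t) := by
      calc (∫ y in Metric.ball x R, K y * (1 + ‖x - y‖) ^ (-μ))
          ≤ ∫ y in Metric.ball x R, C₁ * R ^ (-((n:ℝ) + 2 * s)) * (1 + ‖x - y‖) ^ (-μ) := by
            refine setIntegral_mono_on ((hgint x).integrableOn)
              (hballint.const_mul _) measurableSet_ball fun y hy => ?_
            exact mul_le_mul_of_nonneg_right (hKbd y hy) (Real.rpow_nonneg (by positivity) _)
        _ = C₁ * R ^ (-((n:ℝ) + 2 * s)) * ∫ y in Metric.ball x R, (1 + ‖x - y‖) ^ (-μ) :=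
            integral_const_mul _ _
        _ = C₁ * R ^ (-((n:ℝ) + 2 * s)) * ∫ z : E in Metric.ball 0 R, (1 + ‖z‖) ^ (-μ) := by
            rw [htrans]
        _ ≤ C₁ * R ^ (-((n:ℝ) + 2 * s)) * (c * 3 ^ t * R ^ t) :=
            mul_le_mul_of_nonneg_left (hI R hR)
              (mul_nonneg hC₁.le (Real.rpow_nonneg hR0.le _))
    have key : R ^ (-((n:ℝ) + 2 * s)) * R ^ t ≤
        2 ^ ((n:ℝ) + 2 * s) * (4 ^ μ * (1 + ‖x‖) ^ (-μ)) := by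
      have e2 : t - ((n:ℝ) + 2 * s) + μ ≤ 0 := by linarith
      have h1 : R ^ (-((n:ℝ) + 2 * s)) * R ^ t =
          R ^ (t - ((n:ℝ) + 2 * s) + μ) * R ^ (-μ) := by
        rw [← Real.rpow_add hR0, ← Real.rpow_add hR0]; ring_nf
      rw [h1]
      have h2 : R ^ (t - ((n:ℝ) + 2 * s) + μ) ≤ 2 ^ ((n:ℝ) + 2 * s) := by
        calc R ^ (t - ((n:ℝ) + 2 * s) + μ) ≤ ((1:ℝ)/2) ^ (t - ((n:ℝ) + 2 * s) + μ) :=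
              Real.rpow_le_rpow_of_nonpos (by norm_num) hR e2
          _ = 2 ^ (-(t - ((n:ℝ) + 2 * s) + μ)) := by
              rw [one_div, Real.inv_rpow (by norm_num : (0:ℝ) ≤ 2),
                ← Real.rpow_neg (by norm_num : (0:ℝ) ≤ 2)]
          _ ≤ 2 ^ ((n:ℝ) + 2 * s) :=
              Real.rpow_le_rpow_of_exponent_le (by norm_num) (by linarith)
      have h3 : R ^ (-μ) ≤ 4 ^ μ * (1 + ‖x‖) ^ (-μ) := by
        have hle : (1 + ‖x‖) / 4 ≤ R := by rw [hxR]; linarith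
        calc R ^ (-μ) ≤ ((1 + ‖x‖) / 4) ^ (-μ) :=
              Real.rpow_le_rpow_of_nonpos (by positivity) hle (by linarith)
          _ = 4 ^ μ * (1 + ‖x‖) ^ (-μ) := by
              rw [Real.div_rpow (by positivity) (by norm_num : (0:ℝ) ≤ 4),
                Real.rpow_neg (by norm_num : (0:ℝ) ≤ 4), div_eq_mul_inv, inv_inv, mul_comm]
      exact mul_le_mul h2 h3 (Real.rpow_nonneg hR0.le _) (by positivity)
    have hB : (∫ y in Metric.ball x R, K y * (1 + ‖x - y‖) ^ (-μ)) ≤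
        C₁ * c * 3 ^ t * 2 ^ ((n:ℝ) + 2 * s) * 4 ^ μ * (1 + ‖x‖) ^ (-μ) := by
      refine hB1.trans ?_
      have h4 : C₁ * R ^ (-((n:ℝ) + 2 * s)) * (c * 3 ^ t * R ^ t) =
          C₁ * (c * 3 ^ t) * (R ^ (-((n:ℝ) + 2 * s)) * R ^ t) := by ring
      have h5 : C₁ * c * 3 ^ t * 2 ^ ((n:ℝ) + 2 * s) * 4 ^ μ * (1 + ‖x‖) ^ (-μ) =
          C₁ * (c * 3 ^ t) * (2 ^ ((n:ℝ) + 2 * s) * (4 ^ μ * (1 + ‖x‖) ^ (-μ))) := by ring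
      rw [h4, h5]
      exact mul_le_mul_of_nonneg_left key
        (mul_nonneg hC₁.le (mul_nonneg hc0 (Real.rpow_nonneg (by norm_num) _)))
    rw [hsplit]
    have final : (∫ y in Metric.ball x R, K y * (1 + ‖x - y‖) ^ (-μ)) +
        (∫ y in (Metric.ball x R)ᶜ, K y * (1 + ‖x - y‖) ^ (-μ)) ≤
        (M * 2 ^ μ + C₁ * c * 3 ^ t * 2 ^ ((n:ℝ) + 2 * s) * 4 ^ μ) * (1 + ‖x‖) ^ (-μ) := by
      have := add_le_add hB hA
      linarith [this]
    refine final.trans ?_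
    have : (M * 2 ^ μ + C₁ * c * 3 ^ t * 2 ^ ((n:ℝ) + 2 * s) * 4 ^ μ) ≤
        M * 2 ^ μ + C₁ * c * 3 ^ t * 2 ^ ((n:ℝ) + 2 * s) * 4 ^ μ + 1 := by linarith
    exact mul_le_mul_of_nonneg_right this hD0.le
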